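/- For a dataset D = (s₁,…,sₙ) drawn i.i.d. from P (i.e., D ∼ Pⁿ), define the clipping bias b_D := max_{x∈𝒳} ‖(1/n) Σ_{i=1}^n ( g(x,sᵢ) − Π_C(g(x,sᵢ)) )‖. Then with probability at least 4/5 over D ∼ Pⁿ, one has b_D ≤ 5·G_k^k / ((k−1)·C^{k−1}). -/

import Mathlib

/-!
Clipping moves a vector `v` by `(‖v‖ - C)₊ ≤ ‖v‖ ^ k / ((k - 1) C ^ (k - 1))`, so the clipping
bias of a dataset is at most `(1/n) ∑ᵢ φ(sᵢ) / ((k - 1) C ^ (k - 1))`, where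
`φ(s) = sup_{x ∈ 𝒳} ‖g(x,s)‖ ^ k` is an envelope of mean at most `G_k ^ k`. Markov's inequality
for `∑ᵢ φ(sᵢ)` at level `5 n G_k ^ k` gives the bound with probability at least `4/5`. The envelope
is measurable because, by continuity in `x`, the supremum may be taken over a countable dense
subset of `𝒳`.
-/

open MeasureTheory

/-- Euclidean clipping to the ball of radius `C`: `Π_C(v) = v·min(C/‖v‖, 1)`,
with `Π_C(0) = 0` (division by zero yields `0` in Lean). -/
noncomputable def euclidClip {d : ℕ} (C : ℝ) (v : EuclideanSpace ℝ (Fin d)) :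
    EuclideanSpace ℝ (Fin d) :=
  (min (C / ‖v‖) 1) • v

open scoped ENNReal

lemma norm_sub_euclidClip {d : ℕ} {C : ℝ} (hC : 0 ≤ C) (v : EuclideanSpace ℝ (Fin d)) :
    ‖v - euclidClip C v‖ = max (‖v‖ - C) 0 := by
  rcases le_or_gt ‖v‖ C with hle | hlt
  · have hclip : euclidClip C v = v := by
      rcases eq_or_ne v 0 with rfl | hv
      · simp [euclidClip]
      · rw [euclidClip, min_eq_right ((one_le_div (norm_pos_iff.2 hv)).2 hle), one_smul]
    rw [hclip, sub_self, norm_zero, max_eq_right (by linarith)]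
  · have hv : 0 < ‖v‖ := hC.trans_lt hlt
    have hratio : C / ‖v‖ ≤ 1 := (div_le_one hv).2 hlt.le
    have hsub : v - (C / ‖v‖) • v = (1 - C / ‖v‖) • v := by rw [sub_smul, one_smul]
    rw [euclidClip, min_eq_left hratio, hsub, norm_smul, Real.norm_eq_abs,
      abs_of_nonneg (sub_nonneg.2 hratio), max_eq_left (by linarith)]
    field_simp

lemma natCast_mul_pow_mul_sub_le_pow_succ {C y : ℝ} (hC : 0 ≤ C) (hy : 0 ≤ y) (m : ℕ) :
    m * C ^ m * (y - C) ≤ y ^ (m + 1) := by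
  rcases le_or_gt y C with hle | hlt
  · exact (mul_nonpos_of_nonneg_of_nonpos (by positivity) (by linarith)).trans (by positivity)
  induction m with
  | zero => simpa using hy
  | succ m ih =>
    push_cast
    calc ((m : ℝ) + 1) * C ^ (m + 1) * (y - C)
        = C * (m * C ^ m * (y - C)) + C ^ (m + 1) * (y - C) := by ring
      _ ≤ C * y ^ (m + 1) + y ^ (m + 1) * (y - C) := by gcongr
      _ = y ^ (m + 1 + 1) := by ring

lemma sub_one_mul_pow_pos {k : ℕ} {C : ℝ} (hC : 0 < C) (hk : 2 ≤ k) :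
    0 < ((k : ℝ) - 1) * C ^ (k - 1) := by
  have : (2 : ℝ) ≤ k := by exact_mod_cast hk
  exact mul_pos (by linarith) (by positivity)

lemma norm_sub_euclidClip_le {d k : ℕ} {C : ℝ} (hC : 0 < C) (hk : 2 ≤ k)
    (v : EuclideanSpace ℝ (Fin d)) :
    ‖v - euclidClip C v‖ ≤ ‖v‖ ^ k / ((k - 1) * C ^ (k - 1)) := by
  obtain ⟨m, rfl⟩ : ∃ m, k = m + 1 := ⟨k - 1, by omega⟩
  have hm : (0 : ℝ) < m := by exact_mod_cast (show 0 < m by omega)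
  rw [Nat.cast_add_one, add_sub_cancel_right, Nat.add_sub_cancel, norm_sub_euclidClip hC.le,
    le_div_iff₀ (by positivity), max_mul_of_nonneg _ _ (by positivity), max_le_iff]
  constructor
  · linarith [natCast_mul_pow_mul_sub_le_pow_succ hC.le (norm_nonneg v) m]
  · rw [zero_mul]
    positivity

lemma norm_inv_smul_sum_sub_euclidClip_le {d n k : ℕ} {C M : ℝ} (hC : 0 < C) (hk : 2 ≤ k)
    (hM : 0 ≤ M) (v : Fin n → EuclideanSpace ℝ (Fin d)) (hv : ∑ i, ‖v i‖ ^ k ≤ n * M) :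
    ‖(n : ℝ)⁻¹ • ∑ i, (v i - euclidClip C (v i))‖ ≤ M / ((k - 1) * C ^ (k - 1)) := by
  have hmean : (n : ℝ)⁻¹ * ∑ i, ‖v i‖ ^ k ≤ M := by
    rcases n.eq_zero_or_pos with rfl | hn
    · simpa using hM
    · rwa [inv_mul_le_iff₀ (by positivity)]
  calc ‖(n : ℝ)⁻¹ • ∑ i, (v i - euclidClip C (v i))‖
      = (n : ℝ)⁻¹ * ‖∑ i, (v i - euclidClip C (v i))‖ := by
        rw [norm_smul, norm_inv, Real.norm_natCast]
    _ ≤ (n : ℝ)⁻¹ * ∑ i, ‖v i - euclidClip C (v i)‖ := by gcongr; exact norm_sum_le _ _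
    _ ≤ (n : ℝ)⁻¹ * ∑ i, ‖v i‖ ^ k / ((k - 1) * C ^ (k - 1)) := by
        gcongr with i; exact norm_sub_euclidClip_le hC hk _
    _ = (n : ℝ)⁻¹ * (∑ i, ‖v i‖ ^ k) / ((k - 1) * C ^ (k - 1)) := by
        rw [← Finset.sum_div, mul_div_assoc]
    _ ≤ M / ((k - 1) * C ^ (k - 1)) :=
        div_le_div_of_nonneg_right hmean (sub_one_mul_pow_pos hC hk).le

lemma one_sub_inv_le_measure_le_mul {Ω : Type*} [MeasurableSpace Ω] {μ : Measure Ω}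
    [IsProbabilityMeasure μ] {f : Ω → ℝ≥0∞} (hf : AEMeasurable f μ) {a t : ℝ≥0∞}
    (hfa : ∫⁻ ω, f ω ∂μ ≤ a) (ht : t ≠ 0) :
    1 - t⁻¹ ≤ μ {ω | f ω ≤ t * a} := by
  have htail : μ {ω | t * a < f ω} ≤ t⁻¹ := by
    rcases eq_or_ne a 0 with rfl | ha0
    · have hf0 : f =ᵐ[μ] 0 := (lintegral_eq_zero_iff' hf).1 (le_zero_iff.1 hfa)
      refine (measure_mono_null (fun ω hω => ?_) (ae_iff.1 hf0)).le.trans zero_le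
      exact (pos_of_gt (by simpa using hω)).ne'
    rcases eq_or_ne (t * a) ⊤ with htop | htop
    · simp [htop]
    have hatop : a ≠ ⊤ := fun h => htop (by simp [h, ht])
    have hmarkov : a * (t * μ {ω | t * a ≤ f ω}) ≤ a * 1 :=
      calc a * (t * μ {ω | t * a ≤ f ω}) = t * a * μ {ω | t * a ≤ f ω} := by ring
        _ ≤ a * 1 := (mul_meas_ge_le_lintegral₀ hf (t * a)).trans (hfa.trans_eq (mul_one a).symm)
    rw [ENNReal.mul_le_mul_iff_right ha0 hatop, mul_comm] at hmarkov
    exact (measure_mono fun ω (hω : t * a < f ω) => hω.le).trans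
      (ENNReal.le_inv_iff_mul_le.2 hmarkov)
  have hcover : Set.univ ⊆ {ω | f ω ≤ t * a} ∪ {ω | t * a < f ω} :=
    fun ω _ => le_or_gt (f ω) (t * a)
  rw [tsub_le_iff_right, ← measure_univ (μ := μ)]
  exact (measure_mono hcover).trans ((measure_union_le _ _).trans (by gcongr))

lemma lintegral_sum_comp_eval_pi {ι S : Type*} [Fintype ι] [MeasurableSpace S] (P : Measure S)
    [IsProbabilityMeasure P] {φ : S → ℝ≥0∞} (hφ : Measurable φ) :
    ∫⁻ D, ∑ i, φ (D i) ∂(Measure.pi fun _ : ι => P) = Fintype.card ι * ∫⁻ s, φ s ∂P := by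
  rw [lintegral_finsetSum (f := fun (i : ι) (D : ι → S) => φ (D i)) _
    fun i _ => hφ.comp (measurable_pi_apply i)]
  simp_rw [fun i => (measurePreserving_eval (fun _ : ι => P) i).lintegral_comp hφ]
  simp

lemma measurable_biSup_of_continuousOn {α E : Type*} [MeasurableSpace α] [TopologicalSpace E]
    [TopologicalSpace.PseudoMetrizableSpace E] {X : Set E} (hX : TopologicalSpace.IsSeparable X)
    {h : E → α → ℝ≥0∞}
    (hmeas : ∀ x ∈ X, Measurable (h x)) (hcont : ∀ a, ContinuousOn (fun x => h x a) X) :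
    Measurable fun a => ⨆ x ∈ X, h x a := by
  obtain ⟨t, htX, htc, hXt⟩ := hX.exists_countable_dense_subset
  have hsup : (fun a => ⨆ x ∈ X, h x a) = fun a => ⨆ x ∈ t, h x a := by
    funext a
    refine le_antisymm (iSup₂_le fun x hx => ?_) (biSup_mono htX)
    refine ((hcont a x hx).mono htX).mem_closure (hXt hx) (fun y hy => ?_)
      |> isClosed_Iic.closure_subset
    exact le_biSup (fun y => h y a) hy
  rw [hsup]
  exact Measurable.biSup t htc fun x hx => hmeas x (htX hx)

lemma biSup_ofReal_le_ofReal_biSup {α : Type*} {X : Set α} {f : α → ℝ}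
    (hf : BddAbove (f '' X)) :
    ⨆ x ∈ X, ENNReal.ofReal (f x) ≤ ENNReal.ofReal (⨆ x ∈ X, f x) := by
  refine iSup₂_le fun x hx =>
    ENNReal.ofReal_le_ofReal (le_ciSup₂ (f := fun x (_ : x ∈ X) => f x) ?_ x hx)
  refine hf.mono (Set.iUnion_subset fun y => ?_)
  rintro _ ⟨hy, rfl⟩
  exact Set.mem_image_of_mem f hy

theorem clipping_bias_high_probability_general
    {d : ℕ} {S : Type*} [MeasurableSpace S]
    (P : Measure S) [IsProbabilityMeasure P]
    (X : Set (EuclideanSpace ℝ (Fin d)))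
    (hXcomp : IsCompact X)
    (g : EuclideanSpace ℝ (Fin d) → S → EuclideanSpace ℝ (Fin d))
    (hgmeas : Measurable (fun p : EuclideanSpace ℝ (Fin d) × S => g p.1 p.2))
    (hgcont : ∀ s, ContinuousOn (fun x => g x s) X)
    (k : ℕ) (hk : 2 ≤ k) (n : ℕ)
    (C : ℝ) (hC : 0 < C) (G : ℝ) (hG : 0 ≤ G)
    (hmoment : ∫⁻ s, ENNReal.ofReal (⨆ x ∈ X, ‖g x s‖ ^ k) ∂P ≤ ENNReal.ofReal (G ^ k)) :
    (Measure.pi fun _ : Fin n => P)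
        {D : Fin n → S |
          (⨆ x ∈ X, ‖(n : ℝ)⁻¹ • ∑ i, (g x (D i) - euclidClip C (g x (D i)))‖)
            ≤ 5 * G ^ k / (((k : ℝ) - 1) * C ^ (k - 1))}
      ≥ 4 / 5 := by
  set φ : S → ℝ≥0∞ := fun s => ⨆ x ∈ X, ENNReal.ofReal (‖g x s‖ ^ k)
  have hφ : Measurable φ :=
    measurable_biSup_of_continuousOn (.of_separableSpace X)
      (fun x _ => ((hgmeas.comp measurable_prodMk_left).norm.pow_const k).ennreal_ofReal)
      (fun s => ENNReal.continuous_ofReal.comp_continuousOn ((hgcont s).norm.pow k))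
  have hφP : ∫⁻ s, φ s ∂P ≤ ENNReal.ofReal (G ^ k) :=
    (lintegral_mono fun s => biSup_ofReal_le_ofReal_biSup
      (hXcomp.image_of_continuousOn ((hgcont s).norm.pow k)).bddAbove).trans hmoment
  have hmean : ∫⁻ D, ∑ i, φ (D i) ∂(Measure.pi fun _ : Fin n => P) ≤
      ENNReal.ofReal (n * G ^ k) := by
    rw [lintegral_sum_comp_eval_pi P hφ, Fintype.card_fin, ENNReal.ofReal_mul (by positivity),
      ENNReal.ofReal_natCast]
    gcongr
  have hmarkov := one_sub_inv_le_measure_le_mul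
    (Finset.measurable_sum _ fun i _ => hφ.comp (measurable_pi_apply i)).aemeasurable hmean
    (t := 5) (by norm_num)
  refine le_trans ?_ (hmarkov.trans (measure_mono fun D hD => ?_))
  · refine le_of_eq (ENNReal.eq_sub_of_add_eq (by simp) ?_)
    rw [ENNReal.div_eq_inv_mul, ← mul_add_one, show (4 : ℝ≥0∞) + 1 = 5 by norm_num]
    exact ENNReal.inv_mul_cancel (by norm_num) (by simp)
  have hsum : ∀ x ∈ X, ∑ i, ‖g x (D i)‖ ^ k ≤ n * (5 * G ^ k) := fun x hx => by
    rw [← ENNReal.ofReal_le_ofReal_iff (by positivity), ENNReal.ofReal_sum_of_nonneg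
      (fun i _ => by positivity), mul_left_comm, ENNReal.ofReal_mul (by norm_num),
      ENNReal.ofReal_ofNat]
    exact (Finset.sum_le_sum fun i _ =>
      le_biSup (fun x => ENNReal.ofReal (‖g x (D i)‖ ^ k)) hx).trans hD
  have hB : 0 ≤ 5 * G ^ k / (((k : ℝ) - 1) * C ^ (k - 1)) :=
    div_nonneg (by positivity) (sub_one_mul_pow_pos hC hk).le
  exact Real.iSup_le (fun x => Real.iSup_le (fun hx => norm_inv_smul_sum_sub_euclidClip_le hC hk
    (by positivity) _ (hsum x hx)) hB) hB

/-- For `D ∼ Pⁿ` i.i.d., with probability at least `4/5`, the clipping bias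
`b_D = max_{x∈𝒳} ‖(1/n)∑ᵢ (g(x,sᵢ) − Π_C(g(x,sᵢ)))‖` satisfies
`b_D ≤ 5 G_k^k / ((k−1) C^{k−1})`. -/
theorem clipping_bias_high_probability
    {d : ℕ} {S : Type*} [MeasurableSpace S]
    (P : Measure S) [IsProbabilityMeasure P]
    (X : Set (EuclideanSpace ℝ (Fin d)))
    (hXne : X.Nonempty) (hXcomp : IsCompact X)
    (g : EuclideanSpace ℝ (Fin d) → S → EuclideanSpace ℝ (Fin d))
    (hgmeas : Measurable (fun p : EuclideanSpace ℝ (Fin d) × S => g p.1 p.2))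
    (hgcont : ∀ s, ContinuousOn (fun x => g x s) X)
    (k : ℕ) (hk : 2 ≤ k) (n : ℕ) (hn : 1 ≤ n)
    (C : ℝ) (hC : 0 < C) (G : ℝ) (hG : 0 ≤ G)
    (hmoment : ∫⁻ s, ENNReal.ofReal (⨆ x ∈ X, ‖g x s‖ ^ k) ∂P ≤ ENNReal.ofReal (G ^ k)) :
    (Measure.pi fun _ : Fin n => P)
        {D : Fin n → S |
          (⨆ x ∈ X, ‖(n : ℝ)⁻¹ • ∑ i, (g x (D i) - euclidClip C (g x (D i)))‖)
            ≤ 5 * G ^ k / (((k : ℝ) - 1) * C ^ (k - 1))}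
      ≥ 4 / 5 :=
  clipping_bias_high_probability_general P X hXcomp g hgmeas hgcont k hk n C hC G hG hmoment
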